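/- Let T ⊆ ω^{<ω} be a nonempty subtree in which every node has exactly 3 immediate extensions in T, and let Q ⊆ ω^ω be countable. Then there exists f ∈ [T] such that f ∉ C_g for every g ∈ Q. -/

import Mathlib

/-- The restriction `x↾n` of `x : ℕ → ℕ` to its first `n` values, as a finite sequence. -/
def res (x : ℕ → ℕ) (n : ℕ) : List ℕ := List.ofFn fun i : Fin n => x i

/-- A subtree of `ω^{<ω}`: a set of finite sequences closed under initial segments. -/
def IsSubtree (T : Set (List ℕ)) : Prop := ∀ s ∈ T, ∀ t : List ℕ, t <+: s → t ∈ T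

/-- `[T]`, the set of branches of a subtree `T`. -/
def branches (T : Set (List ℕ)) : Set (ℕ → ℕ) := {x | ∀ n, res x n ∈ T}

/-- `C_g`: the set of `f` with `f(n) ∈ {2g(n), 2g(n)+1}` for all `n`,
i.e. `f = 2g + x` for some `x ∈ 2^ω`. -/
def Cset (g : ℕ → ℕ) : Set (ℕ → ℕ) :=
  {f | ∀ n, f n = 2 * g n ∨ f n = 2 * g n + 1}

/-!
Diagonalization: enumerate `Q` as `g₀, g₁, …` and build a branch of `T` one node at a time.
At level `n` the current node has three successors, while `C_{gₙ}` allows only the two values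
`2gₙ(n)` and `2gₙ(n) + 1` there, so some successor `f(n)` rules out `f ∈ C_{gₙ}`.
-/

theorem Set.exists_mem_notMem_of_encard_lt_encard {α : Type*} {s t : Set α}
    (h : t.encard < s.encard) : ∃ x ∈ s, x ∉ t := by
  by_contra! hst
  exact (Set.encard_le_encard hst).not_gt h

theorem Set.encard_pair_le {α : Type*} (x y : α) : ({x, y} : Set α).encard ≤ 2 := by
  calc ({x, y} : Set α).encard ≤ ({y} : Set α).encard + 1 := Set.encard_insert_le _ x
    _ = 2 := by rw [Set.encard_singleton]; rfl

theorem res_succ (x : ℕ → ℕ) (n : ℕ) : res x (n + 1) = res x n ++ [x n] := by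
  rw [res, res, List.ofFn_succ', List.concat_eq_append]
  rfl

theorem length_res (x : ℕ → ℕ) (n : ℕ) : (res x n).length = n := by
  simp [res]

theorem exists_mem_branches_of_forall_extension {T : Set (List ℕ)} (hne : [] ∈ T)
    (P : ℕ → ℕ → Prop) (hext : ∀ s ∈ T, ∃ m, s ++ [m] ∈ T ∧ P s.length m) :
    ∃ f ∈ branches T, ∀ n, P n (f n) := by
  choose pick hpickT hpickP using fun s : T => hext s s.2
  let node : ℕ → T := fun n => Nat.rec ⟨[], hne⟩ (fun _ s => ⟨s ++ [pick s], hpickT s⟩) n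
  let f : ℕ → ℕ := fun n => pick (node n)
  have hres : ∀ n, res f n = (node n).val := by
    intro n
    induction n with
    | zero => rfl
    | succ n ih => rw [res_succ, ih]
  refine ⟨f, fun n => by rw [hres]; exact (node n).2, fun n => ?_⟩
  simpa only [← hres, length_res] using hpickP (node n)

theorem three_splitting_avoids_countably_many_general (T : Set (List ℕ))
    (hne : [] ∈ T) (h3 : ∀ s ∈ T, {n : ℕ | s ++ [n] ∈ T}.encard = 3)
    (Q : Set (ℕ → ℕ)) (hQ : Q.Countable) :
    ∃ f ∈ branches T, ∀ g ∈ Q, f ∉ Cset g := by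
  obtain ⟨e, hQe⟩ := Set.countable_iff_exists_subset_range.mp hQ
  obtain ⟨f, hfT, hf⟩ := exists_mem_branches_of_forall_extension hne
    (fun n m => m ∉ ({2 * e n n, 2 * e n n + 1} : Set ℕ)) fun s hs =>
      Set.exists_mem_notMem_of_encard_lt_encard <|
        (Set.encard_pair_le _ _).trans_lt (h3 s hs ▸ by decide)
  refine ⟨f, hfT, fun g hg hfg => ?_⟩
  obtain ⟨k, rfl⟩ := hQe hg
  exact hf k (hfg k)

theorem three_splitting_avoids_countably_many (T : Set (List ℕ)) (hT : IsSubtree T)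
    (hne : [] ∈ T) (h3 : ∀ s ∈ T, {n : ℕ | s ++ [n] ∈ T}.encard = 3)
    (Q : Set (ℕ → ℕ)) (hQ : Q.Countable) :
    ∃ f ∈ branches T, ∀ g ∈ Q, f ∉ Cset g :=
  three_splitting_avoids_countably_many_general T hne h3 Q hQ
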